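/- arXiv:2506.03677 — 5 statements merged into one kernel-verified Lean document; each statement's English description precedes it below -/
import Mathlib

section
/- Let A be a graded polynomial algebra over a field k with A_0 = k, and let M be a finitely generated free graded A-module of rank r. If g_1,...,g_r are homogeneous A-linearly independent elements of M, then the sum of the degrees deg(g_1)+...+deg(g_r) is at least the sum of the degrees of any homogeneous free generating set of M, with equality if and only if g_1,...,g_r generate M (freely) over A. -/
/-!
Write `g = f ⬝ C` with `C = f.toMatrix g`. Comparing homogeneous components, the entry `C i j`
is homogeneous of degree `dg j - df i` and vanishes unless `df i ≤ dg j`, so every term of the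
Leibniz expansion of `det C` is either zero or homogeneous of degree `∑ dg - ∑ df`. Over a domain,
independence of `g` gives `det C ≠ 0`, hence the inequality. Finally `g` is a basis iff `det C` is
a unit, and a nonzero homogeneous element of a graded algebra with `A₀ = k` is a unit iff it has
degree `0`.
-/

open DirectSum Matrix

section GradedModule

variable {A M σ τ : Type*} [Semiring A] [AddCommMonoid M] [Module A M]
  [SetLike σ A] [AddSubmonoidClass σ A] (𝒜 : ℕ → σ) [GradedRing 𝒜]
  [SetLike τ M] [AddSubmonoidClass τ M] (ℳ : ℕ → τ) [Decomposition ℳ]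
  [SetLike.GradedSMul 𝒜 ℳ]

theorem DirectSum.coe_decompose_smul_of_mem (a : A) {m : M} {i : ℕ} (hm : m ∈ ℳ i) (n : ℕ) :
    (decompose ℳ (a • m) n : M) = if i ≤ n then (decompose 𝒜 a (n - i) : A) • m else 0 := by
  induction a using Decomposition.inductionOn 𝒜 with
  | zero => simp
  | @homogeneous j a =>
    have ham : (a : A) • m ∈ ℳ (j + i) := SetLike.GradedSMul.smul_mem a.2 hm
    by_cases hn : j + i = n
    · subst hn
      rw [decompose_of_mem_same ℳ ham, if_pos (Nat.le_add_left i j), Nat.add_sub_cancel,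
        decompose_of_mem_same 𝒜 a.2]
    · rw [decompose_of_mem_ne ℳ ham hn]
      split_ifs with hi
      · rw [decompose_of_mem_ne 𝒜 a.2 (by omega), zero_smul]
      · rfl
  | add a b iha ihb =>
    rw [add_smul, decompose_add, add_apply, AddMemClass.coe_add, iha, ihb]
    split_ifs <;> simp [add_smul]

variable {ι : Type*} [Fintype ι]

theorem Module.Basis.repr_mem_of_mem (f : Module.Basis ι A M) {df : ι → ℕ}
    (hf : ∀ i, f i ∈ ℳ (df i)) {x : M} {n : ℕ} (hx : x ∈ ℳ n) (i : ι) (hi : f.repr x i ≠ 0) :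
    df i ≤ n ∧ f.repr x i ∈ 𝒜 (n - df i) := by
  classical
  let D : ι → A := fun i ↦ if df i ≤ n then (decompose 𝒜 (f.repr x i) (n - df i) : A) else 0
  have hxD : x = ∑ i, D i • f i := calc
    x = decompose ℳ (∑ i, f.repr x i • f i) n := by
      rw [f.sum_repr, decompose_of_mem_same ℳ hx]
    _ = ∑ i, D i • f i := by
      simp only [decompose_sum, DirectSum.sum_apply, AddSubmonoidClass.coe_finsetSum,
        coe_decompose_smul_of_mem 𝒜 ℳ _ (hf _), D, ite_smul, zero_smul]
  have hcD : f.repr x i = D i := by conv_lhs => rw [hxD, f.repr_sum_self]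
  by_cases hle : df i ≤ n
  · refine ⟨hle, ?_⟩
    rw [hcD, show D i = _ from if_pos hle]
    exact SetLike.coe_mem _
  · exact absurd (hcD.trans (if_neg hle)) hi

end GradedModule

section DegreeShiftedMatrix

variable {ι A σ : Type*} [Fintype ι] {d e : ι → ℕ}

theorem Matrix.prod_perm_mem_graded [CommMonoidWithZero A] [SetLike σ A] (𝒜 : ℕ → σ)
    [SetLike.GradedMonoid 𝒜] {C : Matrix ι ι A}
    (hC : ∀ i j, C i j ≠ 0 → d i ≤ e j ∧ C i j ∈ 𝒜 (e j - d i))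
    (τ : Equiv.Perm ι) (hτ : ∏ j, C (τ j) j ≠ 0) :
    ∑ i, d i ≤ ∑ j, e j ∧ ∏ j, C (τ j) j ∈ 𝒜 (∑ j, e j - ∑ i, d i) := by
  have hentry : ∀ j, d (τ j) ≤ e j ∧ C (τ j) j ∈ 𝒜 (e j - d (τ j)) := fun j ↦
    hC _ _ fun h ↦ hτ (Finset.prod_eq_zero (Finset.mem_univ j) h)
  have hsum : ∑ i, d i ≤ ∑ j, e j :=
    (Equiv.sum_comp τ d).symm.trans_le (Finset.sum_le_sum fun j _ ↦ (hentry j).1)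
  refine ⟨hsum, ?_⟩
  have hdeg : ∑ j, (e j - d (τ j)) = ∑ j, e j - ∑ i, d i := by
    rw [Finset.sum_tsub_distrib _ fun j _ ↦ (hentry j).1, Equiv.sum_comp τ d]
  exact hdeg ▸ SetLike.prod_mem_graded 𝒜 _ _ fun j _ ↦ (hentry j).2

theorem Matrix.det_mem_graded [DecidableEq ι] [CommRing A] [SetLike σ A] [AddSubgroupClass σ A]
    (𝒜 : ℕ → σ) [SetLike.GradedMonoid 𝒜] {C : Matrix ι ι A}
    (hC : ∀ i j, C i j ≠ 0 → d i ≤ e j ∧ C i j ∈ 𝒜 (e j - d i))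
    (hdet : C.det ≠ 0) :
    ∑ i, d i ≤ ∑ j, e j ∧ C.det ∈ 𝒜 (∑ j, e j - ∑ i, d i) := by
  rw [Matrix.det_apply] at hdet ⊢
  obtain ⟨τ, -, hτ⟩ := Finset.exists_ne_zero_of_sum_ne_zero hdet
  have hsum := (prod_perm_mem_graded 𝒜 hC τ fun h ↦ hτ (by rw [h, smul_zero])).1
  refine ⟨hsum, sum_mem fun τ _ ↦ ?_⟩
  by_cases hτ : ∏ j, C (τ j) j = 0
  · rw [hτ, smul_zero]
    exact zero_mem _
  · rw [Units.smul_def]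
    exact zsmul_mem (prod_perm_mem_graded 𝒜 hC τ hτ).2 _

end DegreeShiftedMatrix

theorem Module.Basis.det_ne_zero_of_linearIndependent {ι R M : Type*} [Fintype ι] [DecidableEq ι]
    [CommRing R] [IsDomain R] [AddCommGroup M] [Module R M] (e : Module.Basis ι R M) {v : ι → M}
    (hv : LinearIndependent R v) : e.det v ≠ 0 := by
  intro h
  have hcols : LinearIndependent R (e.toMatrix v).col := hv.map' _ e.equivFun.ker
  obtain ⟨w, hw, hCw⟩ := exists_mulVec_eq_zero_iff.mpr h
  exact hw (mulVec_injective_iff.mpr hcols (hCw.trans (mulVec_zero _).symm))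

section ConnectedGraded

variable {A σ : Type*} [Semiring A] [SetLike σ A] [AddSubmonoidClass σ A] (𝒜 : ℕ → σ)
  [GradedRing 𝒜]

theorem SetLike.eq_zero_of_isUnit_of_mem [Nontrivial A] {a : A} {n : ℕ} (ha : a ∈ 𝒜 n)
    (hu : IsUnit a) : n = 0 := by
  obtain ⟨b, hb⟩ := hu.exists_right_inv
  by_contra hn
  have h1 : (decompose 𝒜 (a * b) 0 : A) = 1 := by
    rw [hb, decompose_of_mem_same 𝒜 SetLike.GradedOne.one_mem]
  rw [coe_decompose_mul_of_left_mem_of_not_le 𝒜 ha (by omega)] at h1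
  exact zero_ne_one h1

theorem isUnit_iff_eq_zero_of_mem {k : Type*} [Field k] [Algebra k A]
    (h0 : ∀ a ∈ 𝒜 0, ∃ c : k, a = algebraMap k A c) {a : A} {n : ℕ} (ha : a ∈ 𝒜 n) (ha0 : a ≠ 0) :
    IsUnit a ↔ n = 0 := by
  have : Nontrivial A := ⟨⟨a, 0, ha0⟩⟩
  refine ⟨SetLike.eq_zero_of_isUnit_of_mem 𝒜 ha, fun hn ↦ ?_⟩
  obtain ⟨c, rfl⟩ := h0 a (hn ▸ ha)
  exact (Ne.isUnit fun hc ↦ ha0 (by rw [hc, map_zero])).map _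

end ConnectedGraded

theorem degree_sum_test_for_free_generation_general
    {k A M : Type*} [Field k] [CommRing A] [IsDomain A] [Algebra k A]
    (𝒜 : ℕ → Submodule k A) [GradedAlgebra 𝒜]
    -- `A₀ = k`:
    (h0 : ∀ a ∈ 𝒜 0, ∃ c : k, a = algebraMap k A c)
    [AddCommGroup M] [Module A M] [Module k M] [IsScalarTower k A M]
    -- a grading on `M` compatible with that of `A`:
    (ℳ : ℕ → Submodule k M) (hdecomp : DirectSum.IsInternal ℳ)
    (hsmul : ∀ i j : ℕ, ∀ a ∈ 𝒜 i, ∀ m ∈ ℳ j, a • m ∈ ℳ (i + j))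
    (r : ℕ)
    -- a homogeneous basis `f` of `M` with degrees `df`:
    (f : Module.Basis (Fin r) A M) (df : Fin r → ℕ) (hf : ∀ i, f i ∈ ℳ (df i))
    -- homogeneous `A`-independent elements `g` of degrees `dg`:
    (g : Fin r → M) (dg : Fin r → ℕ) (hg : ∀ i, g i ∈ ℳ (dg i))
    (hind : LinearIndependent A g) :
    (∑ i, df i) ≤ (∑ i, dg i) ∧
      ((∑ i, dg i) = (∑ i, df i) ↔ Submodule.span A (Set.range g) = ⊤) := by
  let : Decomposition ℳ := hdecomp.chooseDecomposition
  have : SetLike.GradedSMul 𝒜 ℳ := ⟨fun i j _ _ ha hm ↦ hsmul i j _ ha _ hm⟩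
  have hdet : f.det g ≠ 0 := f.det_ne_zero_of_linearIndependent hind
  obtain ⟨hle, hmem⟩ := (f.toMatrix g).det_mem_graded 𝒜
    (fun i j ↦ f.repr_mem_of_mem 𝒜 ℳ hf (hg j) i) hdet
  refine ⟨hle, ?_⟩
  calc ∑ i, dg i = ∑ i, df i ↔ ∑ i, dg i - ∑ i, df i = 0 := by omega
    _ ↔ IsUnit (f.det g) := (isUnit_iff_eq_zero_of_mem 𝒜 h0 hmem hdet).symm
    _ ↔ Submodule.span A (Set.range g) = ⊤ := by rw [← f.is_basis_iff_det, and_iff_right hind]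

/-- Let `A` be a graded polynomial algebra over a field `k` with `A₀ = k`,
and `M` a finitely generated free graded `A`-module with homogeneous basis `f` of
degrees `df`.  If `g 1, …, g r` are homogeneous `A`-linearly independent elements of `M`
of degrees `dg`, then `∑ df ≤ ∑ dg`, with equality iff the `g i` generate `M` over `A`. -/
theorem degree_sum_test_for_free_generation
    {k A M : Type*} [Field k] [CommRing A] [IsDomain A] [Algebra k A]
    (𝒜 : ℕ → Submodule k A) [GradedAlgebra 𝒜]
    -- `A₀ = k`:
    (h0 : ∀ a ∈ 𝒜 0, ∃ c : k, a = algebraMap k A c)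
    -- `A` is a polynomial algebra:
    (hpoly : ∃ m : ℕ, Nonempty (A ≃ₐ[k] MvPolynomial (Fin m) k))
    [AddCommGroup M] [Module A M] [Module k M] [IsScalarTower k A M]
    -- a grading on `M` compatible with that of `A`:
    (ℳ : ℕ → Submodule k M) (hdecomp : DirectSum.IsInternal ℳ)
    (hsmul : ∀ i j : ℕ, ∀ a ∈ 𝒜 i, ∀ m ∈ ℳ j, a • m ∈ ℳ (i + j))
    (r : ℕ)
    -- a homogeneous basis `f` of `M` with degrees `df`:
    (f : Module.Basis (Fin r) A M) (df : Fin r → ℕ) (hf : ∀ i, f i ∈ ℳ (df i))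
    -- homogeneous `A`-independent elements `g` of degrees `dg`:
    (g : Fin r → M) (dg : Fin r → ℕ) (hg : ∀ i, g i ∈ ℳ (dg i)) (hg0 : ∀ i, g i ≠ 0)
    (hind : LinearIndependent A g) :
    (∑ i, df i) ≤ (∑ i, dg i) ∧
      ((∑ i, dg i) = (∑ i, df i) ↔ Submodule.span A (Set.range g) = ⊤) :=
  degree_sum_test_for_free_generation_general 𝒜 h0 ℳ hdecomp hsmul r f df hf g dg hg hind
end

section
/- Let G be a finite group, H ≤ G, V a kG-module, and M_{G/H} the k-span of {e_t − e_ι : t ∈ T} inside the permutation module k(G/H). Then the kernel of the relative transfer map Tr^G_H : k[V]^H → k[V]^G, f ↦ Σ_{t∈T} t·f, is isomorphic as a graded k[V]^G-module to the module of covariants (k[V] ⊗ M_{G/H})^G. -/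
/-!
An `H`-invariant `f` determines the `G`-equivariant map `gH ↦ g • f` on `G ⧸ H`, and every
equivariant map arises this way from its value at the base coset (Frobenius reciprocity for
the coinduced module). Under this bijection the transfer `∑ₜ t • f` is the sum of the values of
the equivariant map, so the kernel of the transfer corresponds to the covariants with values
in `k[V] ⊗ M_{G/H}`.
-/

namespace QuotientGroup

variable {G : Type*} [Group G] {H : Subgroup G} {R : Type*} [MulAction G R]

theorem smul_eq_smul_of_mk_eq {f : R} (hf : ∀ h ∈ H, h • f = f) {a b : G}
    (hab : (a : G ⧸ H) = b) : a • f = b • f := by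
  have hmem : a⁻¹ * b ∈ H := QuotientGroup.eq.mp hab
  calc a • f = a • (a⁻¹ * b) • f := by rw [hf _ hmem]
    _ = b • f := by rw [smul_smul, mul_inv_cancel_left]

theorem smul_out_smul_inv_smul {f : R} (hf : ∀ h ∈ H, h • f = f) (g : G) (c : G ⧸ H) :
    g • (g⁻¹ • c).out • f = c.out • f := by
  rw [smul_smul]
  refine smul_eq_smul_of_mk_eq hf ?_
  change g • ((g⁻¹ • c).out : G ⧸ H) = _
  rw [out_eq', out_eq', smul_inv_smul]

theorem out_mk_one_smul {f : R} (hf : ∀ h ∈ H, h • f = f) : ((1 : G) : G ⧸ H).out • f = f := by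
  rw [smul_eq_smul_of_mk_eq hf (out_eq' _), one_smul]

theorem out_smul_apply_mk_one {φ : G ⧸ H → R} (hφ : ∀ g : G, (fun c => g • φ (g⁻¹ • c)) = φ)
    (c : G ⧸ H) : c.out • φ ((1 : G) : G ⧸ H) = φ c := by
  have hc : c.out⁻¹ • c = ((1 : G) : G ⧸ H) := by
    conv_lhs => arg 2; rw [← out_eq' c]
    change ((c.out⁻¹ * c.out : G) : G ⧸ H) = _
    rw [inv_mul_cancel]
  simpa only [hc] using congrFun (hφ c.out) c

theorem smul_apply_mk_one_of_mem {φ : G ⧸ H → R} (hφ : ∀ g : G, (fun c => g • φ (g⁻¹ • c)) = φ)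
    {h : G} (hh : h ∈ H) : h • φ ((1 : G) : G ⧸ H) = φ ((1 : G) : G ⧸ H) := by
  have hc : h⁻¹ • ((1 : G) : G ⧸ H) = ((1 : G) : G ⧸ H) :=
    QuotientGroup.eq.mpr (by simpa using hh)
  simpa only [hc] using congrFun (hφ h) ((1 : G) : G ⧸ H)

variable (H R) in
noncomputable def fixedPointsEquivEquivariant :
    {f : R // ∀ h ∈ H, h • f = f} ≃
      {φ : G ⧸ H → R // ∀ g : G, (fun c => g • φ (g⁻¹ • c)) = φ} where
  toFun f := ⟨fun c => c.out • f.1, fun g => funext (smul_out_smul_inv_smul f.2 g)⟩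
  invFun φ := ⟨φ.1 ((1 : G) : G ⧸ H), fun _ hh => smul_apply_mk_one_of_mem φ.2 hh⟩
  left_inv f := Subtype.ext (out_mk_one_smul f.2)
  right_inv φ := Subtype.ext (funext (out_smul_apply_mk_one φ.2))

end QuotientGroup

/-- The kernel of the relative transfer map
`Tr^G_H : k[V]^H → k[V]^G`, `f ↦ Σ_{t∈T} t•f`, is isomorphic as a
`k[V]^G`-module to the module of covariants `(k[V] ⊗ M_{G/H})^G`, where
`M_{G/H} ⊆ k(G/H)` is the kernel of the augmentation.  Here
`k[V] ⊗ k(G/H)` is realised as `G ⧸ H → k[V]` with the diagonal action, and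
`k[V] ⊗ M_{G/H}` as the subspace of functions whose values sum to zero. -/
theorem ker_transfer_iso_covariants
    {G : Type*} [Group G] (H : Subgroup G) [Fintype (G ⧸ H)]
    {R : Type*} [CommRing R] [MulSemiringAction G R] :
    ∃ e : {f : R // (∀ h ∈ H, h • f = f) ∧ (∑ c : G ⧸ H, (Quotient.out c) • f) = 0} ≃
          {φ : G ⧸ H → R //
            (∀ g : G, (fun c : G ⧸ H => g • φ (g⁻¹ • c)) = φ) ∧ (∑ c : G ⧸ H, φ c) = 0},
      -- additivity
      (∀ f₁ f₂ : {f : R // (∀ h ∈ H, h • f = f) ∧ (∑ c : G ⧸ H, (Quotient.out c) • f) = 0},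
          ∀ hsum : ((f₁ : R) + (f₂ : R)) ∈
            {f : R | (∀ h ∈ H, h • f = f) ∧ (∑ c : G ⧸ H, (Quotient.out c) • f) = 0},
          (e ⟨(f₁ : R) + (f₂ : R), hsum⟩ : G ⧸ H → R) = (e f₁ : G ⧸ H → R) + (e f₂ : G ⧸ H → R)) ∧
      -- k[V]^G-linearity
      (∀ a : R, (∀ g : G, g • a = a) →
        ∀ f : {f : R // (∀ h ∈ H, h • f = f) ∧ (∑ c : G ⧸ H, (Quotient.out c) • f) = 0},
        ∀ hmem : a * (f : R) ∈
            {f : R | (∀ h ∈ H, h • f = f) ∧ (∑ c : G ⧸ H, (Quotient.out c) • f) = 0},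
          (e ⟨a * (f : R), hmem⟩ : G ⧸ H → R) = fun c => a * (e f : G ⧸ H → R) c) := by
  let e := ((Equiv.subtypeSubtypeEquivSubtypeInter (fun f : R => ∀ h ∈ H, h • f = f)
    (fun f => ∑ c : G ⧸ H, c.out • f = 0)).symm.trans
    ((QuotientGroup.fixedPointsEquivEquivariant H R).subtypeEquiv fun _ => Iff.rfl)).trans
    (Equiv.subtypeSubtypeEquivSubtypeInter _ (fun φ : G ⧸ H → R => ∑ c, φ c = 0))
  refine ⟨e, fun f₁ f₂ _ => funext fun c => ?_, fun a ha f _ => funext fun c => ?_⟩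
  · exact smul_add c.out f₁.1 f₂.1
  · change c.out • (a * f.1) = a * c.out • f.1
    rw [smul_mul', ha]
end

section
/- Let G be a cyclic group of order q = p^k with generator g, acting on a k[G]-module V over a field k of characteristic p. Set Δ = g − 1 ∈ kG acting on k[V]. Then for each 1 ≤ n < q there is a degree-preserving isomorphism of k[V]^G-modules between ker(Δ^n : k[V] → k[V]) and the module of covariants k[V, V_n]^G, where V_n is the indecomposable kG-module of dimension n. -/
/-!
Writing a covariant as `∑ᵢ φᵢ ⊗ wᵢ`, invariance under `σ ⊗ σ` unwinds, from the top coordinate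
down, to `φᵢ₊₁ = Δ φᵢ` for `i + 1 < n` and `Δ φₙ₋₁ = 0`. So covariants are exactly the tuples
`(Δⁱ f)_{i<n}` with `Δⁿ f = 0`, and `f ↦ (Δⁱ f)ᵢ` is the isomorphism: `Δ` commutes with
multiplication by invariants and does not raise degree, while the `0`-th coordinate is `f` itself.
-/

open MvPolynomial

section Covariants

variable {M : Type*} [AddCommGroup M] (σ : M → M)

def twistedTail (ψ : ℕ → M) (j n : ℕ) : M :=
  ∑ i ∈ Finset.Ico j n, ((-1 : ℤ) ^ (i - j)) • σ (ψ i)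

lemma twistedTail_of_lt (ψ : ℕ → M) {j n : ℕ} (hj : j < n) :
    twistedTail σ ψ j n = σ (ψ j) - twistedTail σ ψ (j + 1) n := by
  rw [twistedTail, Finset.sum_eq_sum_Ico_succ_bot hj, twistedTail, sub_eq_add_neg,
    ← Finset.sum_neg_distrib, Nat.sub_self, pow_zero, one_smul]
  congr 1
  refine Finset.sum_congr rfl fun i hi => ?_
  rw [show i - j = i - (j + 1) + 1 by grind, pow_succ, mul_neg_one, neg_smul]

lemma twistedTail_eq_iff (ψ : ℕ → M) {n : ℕ} (hψ : ψ n = 0) :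
    (∀ j < n, twistedTail σ ψ j n = ψ j) ↔ ∀ j < n, ψ (j + 1) = σ (ψ j) - ψ j := by
  have tail_top : twistedTail σ ψ n n = ψ n := by simp [twistedTail, hψ]
  constructor
  · intro h j hj
    have next : twistedTail σ ψ (j + 1) n = ψ (j + 1) := by
      rcases (Nat.succ_le_of_lt hj).lt_or_eq with hj' | rfl
      exacts [h (j + 1) hj', tail_top]
    have := twistedTail_of_lt σ ψ hj
    rw [h j hj, next] at this
    linear_combination (norm := abel) this
  · intro h j hj
    suffices ∀ j ≤ n, twistedTail σ ψ j n = ψ j from this j hj.le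
    intro j hj
    induction hj using Nat.decreasingInduction with
    | self => exact tail_top
    | of_succ j hj ih => rw [twistedTail_of_lt σ ψ hj, ih, h j hj, sub_sub_cancel]

def delta : M → M := fun x => σ x - x

lemma delta_apply (x : M) : delta σ x = σ x - x := rfl

/-- With `σ wᵢ = ∑_{j ≤ i} (-1)^(i-j) wⱼ` on the basis `w` of `V_n`, this says that
`∑ᵢ φᵢ ⊗ wᵢ` is fixed by `σ ⊗ σ`. -/
def IsCovariant {n : ℕ} (φ : Fin n → M) : Prop :=
  ∀ j : Fin n,
    (∑ i : Fin n, if j ≤ i then ((-1 : ℤ) ^ ((i : ℕ) - (j : ℕ))) • σ (φ i) else 0) = φ j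

lemma sum_fin_ite_le_eq_twistedTail (ψ : ℕ → M) {n : ℕ} (j : Fin n) :
    (∑ i : Fin n, if j ≤ i then ((-1 : ℤ) ^ ((i : ℕ) - (j : ℕ))) • σ (ψ i) else 0)
      = twistedTail σ ψ j n := by
  simp only [Fin.le_def]
  rw [Fin.sum_univ_eq_sum_range
      (fun i => if (j : ℕ) ≤ i then ((-1 : ℤ) ^ (i - j)) • σ (ψ i) else 0),
    ← Finset.sum_filter, Finset.range_eq_Ico, Finset.Ico_filter_le_of_left_le (Nat.zero_le _)]
  rfl

lemma isCovariant_iff_twistedTail (ψ : ℕ → M) {n : ℕ} :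
    IsCovariant σ (fun i : Fin n => ψ i) ↔ ∀ j < n, twistedTail σ ψ j n = ψ j := by
  simp only [IsCovariant, sum_fin_ite_le_eq_twistedTail, Fin.forall_iff]

lemma isCovariant_iterate_delta {n : ℕ} {f : M} (hf : (delta σ)^[n] f = 0) :
    IsCovariant σ (fun i : Fin n => (delta σ)^[i] f) := by
  rw [isCovariant_iff_twistedTail σ (fun i => (delta σ)^[i] f), twistedTail_eq_iff σ _ hf]
  intro j _
  exact Function.iterate_succ_apply' _ _ _

lemma IsCovariant.eq_iterate_delta {n : ℕ} {φ : Fin n → M} (hφ : IsCovariant σ φ) (hn : 0 < n) :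
    (delta σ)^[n] (φ ⟨0, hn⟩) = 0 ∧ φ = fun i : Fin n => (delta σ)^[i] (φ ⟨0, hn⟩) := by
  set ψ : ℕ → M := fun i => if h : i < n then φ ⟨i, h⟩ else 0
  have hψφ : (fun i : Fin n => ψ i) = φ := funext fun i => dif_pos i.isLt
  rw [← hψφ, isCovariant_iff_twistedTail, twistedTail_eq_iff σ ψ (dif_neg (lt_irrefl n))] at hφ
  have hiter : ∀ j ≤ n, ψ j = (delta σ)^[j] (ψ 0) := by
    intro j hj
    induction j with
    | zero => rfl
    | succ j ih => rw [hφ j hj, ih (Nat.le_of_succ_le hj), Function.iterate_succ_apply']; rfl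
  have h0 : ψ 0 = φ ⟨0, hn⟩ := dif_pos hn
  refine ⟨?_, funext fun i => ?_⟩
  · rw [← h0, ← hiter n le_rfl]
    exact dif_neg (lt_irrefl n)
  · rw [← h0, ← hiter i i.isLt.le]
    exact (congrFun hψφ i).symm

end Covariants

def deltaCoords {M F : Type*} [AddCommGroup M] [FunLike F M M] [AddMonoidHomClass F M M]
    (σ : F) (n : ℕ) : M →+ (Fin n → M) :=
  let σ' : AddMonoid.End M := (σ : M →+ M)
  AddMonoidHom.pi fun i : Fin n => ((σ' - 1) ^ (i : ℕ) : AddMonoid.End M)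

lemma iterate_delta_mul_of_fixed {R F : Type*} [Ring R] [FunLike F R R] [MulHomClass F R R]
    (σ : F) {a : R} (ha : σ a = a) (i : ℕ) (f : R) :
    (delta σ)^[i] (a * f) = a * (delta σ)^[i] f := by
  have : Function.Semiconj (a * ·) (delta σ) (delta σ) := fun x => by
    simp only [delta_apply, map_mul, ha, mul_sub]
  exact (this.iterate_right i f).symm

lemma apply_iterate_le {α β : Type*} [Preorder β] (T : α → α) (w : α → β)
    (hT : ∀ x, w (T x) ≤ w x) (i : ℕ) (x : α) : w (T^[i] x) ≤ w x := by
  induction i with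
  | zero => exact le_rfl
  | succ i ih =>
    rw [Function.iterate_succ_apply']
    exact (hT _).trans ih

lemma sup_fin_apply_iterate_eq {α β : Type*} [SemilatticeSup β] [OrderBot β] (T : α → α)
    (w : α → β) (hT : ∀ x, w (T x) ≤ w x) {n : ℕ} (hn : 0 < n) (x : α) :
    (Finset.univ.sup fun i : Fin n => w (T^[i] x)) = w x :=
  le_antisymm (Finset.sup_le fun i _ => apply_iterate_le T w hT i x)
    (Finset.le_sup (f := fun i : Fin n => w (T^[i] x)) (Finset.mem_univ (⟨0, hn⟩ : Fin n)))

lemma totalDegree_delta_le {R ι : Type*} [CommRing R] (σ : MvPolynomial ι R → MvPolynomial ι R)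
    (hσ : ∀ f, (σ f).totalDegree ≤ f.totalDegree) (f : MvPolynomial ι R) :
    (delta σ f).totalDegree ≤ f.totalDegree :=
  (totalDegree_sub _ _).trans (max_le (hσ f) le_rfl)

theorem ker_delta_pow_iso_covariants_general
    {K : Type*} [Field K] (m : ℕ)
    (σ : MvPolynomial (Fin m) K ≃ₐ[K] MvPolynomial (Fin m) K)
    (hdeg : ∀ f : MvPolynomial (Fin m) K, (σ f).totalDegree = f.totalDegree)
    (Δ : MvPolynomial (Fin m) K → MvPolynomial (Fin m) K)
    (hΔ : ∀ f, Δ f = σ f - f)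
    (n : ℕ) (hn1 : 1 ≤ n) :
    ∃ E : MvPolynomial (Fin m) K →+ (Fin n → MvPolynomial (Fin m) K),
      -- the image of the kernel of Δ^n consists of covariants (G-fixed tuples)
      (∀ f, Δ^[n] f = 0 → ∀ j : Fin n,
          (∑ i : Fin n, if j ≤ i then ((-1 : ℤ) ^ ((i : ℕ) - (j : ℕ))) • σ (E f i) else 0)
            = E f j) ∧
      -- injectivity on ker(Δ^n)
      (∀ f, Δ^[n] f = 0 → E f = 0 → f = 0) ∧
      -- surjectivity onto the covariants
      (∀ φ : Fin n → MvPolynomial (Fin m) K,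
        (∀ j : Fin n,
          (∑ i : Fin n, if j ≤ i then ((-1 : ℤ) ^ ((i : ℕ) - (j : ℕ))) • σ (φ i) else 0)
            = φ j) →
        ∃ f, Δ^[n] f = 0 ∧ E f = φ) ∧
      -- k[V]^G-linearity
      (∀ a f, σ a = a → E (a * f) = fun i => a * E f i) ∧
      -- degree preservation
      (∀ f, Δ^[n] f = 0 →
        (Finset.univ.sup fun i : Fin n => (E f i).totalDegree) = f.totalDegree) := by
  obtain rfl : Δ = delta σ := funext hΔ
  refine ⟨deltaCoords σ n, fun f hf => isCovariant_iterate_delta σ hf,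
    fun f _ hEf => congrFun hEf ⟨0, hn1⟩, fun φ hφ => ?_,
    fun a f ha => funext fun i => iterate_delta_mul_of_fixed σ ha i f,
    fun f _ => sup_fin_apply_iterate_eq (delta σ) totalDegree
      (totalDegree_delta_le σ fun f => (hdeg f).le) hn1 f⟩
  obtain ⟨hker, hφ_eq⟩ := IsCovariant.eq_iterate_delta σ hφ hn1
  exact ⟨_, hker, hφ_eq.symm⟩

/-- For `G = ⟨g⟩` cyclic of order `q = p^k` acting on `k[V]`
(`char k = p`) with `Δ = g − 1`, for each `1 ≤ n < q` there is a degree-preserving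
isomorphism of `k[V]^G`-modules `ker(Δ^n) ≅ k[V, V_n]^G`.  Here the covariants
`(k[V] ⊗ V_n)^G` are realised as tuples `φ : Fin n → k[V]` (coordinates in the
basis `w_i` of `V_n` with `σ w_i = Σ_{j ≤ i} (−1)^{i−j} w_j`) fixed by the
diagonal action. -/
theorem ker_delta_pow_iso_covariants
    {K : Type*} [Field K] (p s m : ℕ) [Fact p.Prime] [CharP K p]
    (σ : MvPolynomial (Fin m) K ≃ₐ[K] MvPolynomial (Fin m) K)
    (hdeg : ∀ f : MvPolynomial (Fin m) K, (σ f).totalDegree = f.totalDegree)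
    (hord : σ ^ (p ^ s) = 1)
    (Δ : MvPolynomial (Fin m) K → MvPolynomial (Fin m) K)
    (hΔ : ∀ f, Δ f = σ f - f)
    (n : ℕ) (hn1 : 1 ≤ n) (hnq : n < p ^ s) :
    ∃ E : MvPolynomial (Fin m) K →+ (Fin n → MvPolynomial (Fin m) K),
      -- the image of the kernel of Δ^n consists of covariants (G-fixed tuples)
      (∀ f, Δ^[n] f = 0 → ∀ j : Fin n,
          (∑ i : Fin n, if j ≤ i then ((-1 : ℤ) ^ ((i : ℕ) - (j : ℕ))) • σ (E f i) else 0)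
            = E f j) ∧
      -- injectivity on ker(Δ^n)
      (∀ f, Δ^[n] f = 0 → E f = 0 → f = 0) ∧
      -- surjectivity onto the covariants
      (∀ φ : Fin n → MvPolynomial (Fin m) K,
        (∀ j : Fin n,
          (∑ i : Fin n, if j ≤ i then ((-1 : ℤ) ^ ((i : ℕ) - (j : ℕ))) • σ (φ i) else 0)
            = φ j) →
        ∃ f, Δ^[n] f = 0 ∧ E f = φ) ∧
      -- k[V]^G-linearity
      (∀ a f, σ a = a → E (a * f) = fun i => a * E f i) ∧
      -- degree preservation
      (∀ f, Δ^[n] f = 0 →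
        (Finset.univ.sup fun i : Fin n => (E f i).totalDegree) = f.totalDegree) :=
  ker_delta_pow_iso_covariants_general m σ hdeg Δ hΔ n hn1
end

section
/- Let k have characteristic 2 and G = ⟨σ⟩ be cyclic of order 4 acting on V = V_3 via σx_1 = x_1+x_2, σx_2 = x_2+x_3, σx_3 = x_3. Then u := x_1^2 x_3 + x_1 x_3^2 + x_2^3 + x_2^2 x_3 is G-invariant, and k[V]^G is a free module over A = k[N^G(x_1), N^G_H(x_2), x_3] with basis {1, u}, where H = ⟨σ^2⟩, N^G(x_1) = Π_{i=0}^{3} σ^i(x_1), and N^G_H(x_2) = x_2 · σ(x_2). -/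
/-!
Write `x₁, x₂, x₃` for `X 0, X 1, X 2`, and put `w = x₁² + x₁x₃`, `n₁ = N^G(x₁)`,
`n₂ = N^G_H(x₂) = x₂² + x₂x₃`; in characteristic 2, `σw = w + n₂` and `w² = n₁ + n₂w`.

Every polynomial is `p + q x₁` with `p, q ∈ K[w, x₂, x₃]`; this ring is fixed by `σ²`, whereas
`σ²x₁ = x₁ + x₃`, so an invariant has `q = 0`. Next `K[w, x₂, x₃] = B ⊕ B w` with
`B = K[n₁, x₂, x₃]`: the sum is direct because, as polynomials in `x₁` over `K[x₂, x₃]`, elements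
of `B` have degree divisible by `4 = deg n₁` while `w` has degree 2. For an invariant `p + q w`
this gives `σq = q` and `p - σp = q n₂`. Finally `B = A + A x₂` and `σx₂ = x₂ + x₃`, so the
`σ`-fixed elements of `B` lie in `A` and `p - σp` is a multiple `x₃ b` of `x₃`. Comparing
coefficients of `q n₂ = x₃ b` over `K[x₂, x₃]` gives `q = x₃ c`, and then `p + q w = a + c u`.
-/

open MvPolynomial

/-- The action of the generator `σ` of `G = C₄` on `k[V₃] = k[x₁,x₂,x₃]`
(char 2): `σx₁ = x₁+x₂`, `σx₂ = x₂+x₃`, `σx₃ = x₃` (variables `X 0, X 1, X 2`). -/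
noncomputable def sigmaC4 (K : Type*) [CommSemiring K] :
    MvPolynomial (Fin 3) K →ₐ[K] MvPolynomial (Fin 3) K :=
  aeval ![X 0 + X 1, X 1 + X 2, X 2]

namespace Polynomial

variable {S : Type*} [Ring S] [NoZeroDivisors S] {M W P Q : S[X]}

theorem eq_zero_of_comp_eq_zero (hM : 0 < M.natDegree) (h : P.comp M = 0) : P = 0 := by
  refine (comp_eq_zero_iff.mp h).resolve_right fun ⟨_, hMC⟩ => ?_
  rw [hMC, natDegree_C] at hM
  exact hM.false

theorem eq_zero_of_comp_add_comp_mul_eq_zero (hM : 0 < M.natDegree)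
    (hW : ¬ M.natDegree ∣ W.natDegree) (h : P.comp M + Q.comp M * W = 0) : P = 0 ∧ Q = 0 := by
  by_cases hQ : Q = 0
  · rw [hQ, zero_comp, zero_mul, add_zero] at h
    exact ⟨eq_zero_of_comp_eq_zero hM h, hQ⟩
  have hW₀ : W ≠ 0 := by rintro rfl; exact hW (dvd_zero _)
  have hQM : Q.comp M ≠ 0 := mt (eq_zero_of_comp_eq_zero hM) hQ
  have hdeg := congrArg natDegree (eq_neg_of_add_eq_zero_left h)
  rw [natDegree_neg, natDegree_mul hQM hW₀, natDegree_comp, natDegree_comp] at hdeg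
  exact absurd ((Nat.dvd_add_right (dvd_mul_left _ _)).mp (hdeg ▸ dvd_mul_left _ _)) hW

end Polynomial

theorem Algebra.exists_eq_add_mul_of_mem_adjoin {K R : Type*} [CommSemiring K] [CommSemiring R]
    [Algebra K R] {A : Subalgebra K R} {s : Set R} {t a₀ a₁ f : R} (ha₀ : a₀ ∈ A) (ha₁ : a₁ ∈ A)
    (ht : t ^ 2 = a₀ + a₁ * t) (hs : s ⊆ insert t A) (hf : f ∈ adjoin K s) :
    ∃ p ∈ A, ∃ q ∈ A, f = p + q * t := by
  induction hf using adjoin_induction with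
  | mem x hx =>
    rcases hs hx with rfl | hx
    · exact ⟨0, zero_mem _, 1, one_mem _, by ring⟩
    · exact ⟨x, hx, 0, zero_mem _, by ring⟩
  | algebraMap r => exact ⟨algebraMap K R r, A.algebraMap_mem r, 0, zero_mem _, by ring⟩
  | add x y _ _ hx hy =>
    obtain ⟨p, hp, q, hq, rfl⟩ := hx
    obtain ⟨p', hp', q', hq', rfl⟩ := hy
    exact ⟨p + p', add_mem hp hp', q + q', add_mem hq hq', by ring⟩
  | mul x y _ _ hx hy =>
    obtain ⟨p, hp, q, hq, rfl⟩ := hx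
    obtain ⟨p', hp', q', hq', rfl⟩ := hy
    refine ⟨p * p' + q * q' * a₀, add_mem (mul_mem hp hp') (mul_mem (mul_mem hq hq') ha₀),
      p * q' + p' * q + q * q' * a₁,
      add_mem (add_mem (mul_mem hp hq') (mul_mem hp' hq)) (mul_mem (mul_mem hq hq') ha₁), ?_⟩
    calc (p + q * t) * (p' + q' * t) = p * p' + (p * q' + p' * q) * t + q * q' * t ^ 2 := by ring
      _ = _ := by rw [ht]; ring

namespace C4Invariants

variable {K : Type*} [Field K]

local notation "R" => MvPolynomial (Fin 3) K

@[simp] lemma sigmaC4_X_zero : sigmaC4 K (X 0) = X 0 + X 1 := by simp [sigmaC4]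
@[simp] lemma sigmaC4_X_one : sigmaC4 K (X 1) = X 1 + X 2 := by simp [sigmaC4]
@[simp] lemma sigmaC4_X_two : sigmaC4 K (X 2) = X 2 := by simp [sigmaC4]

noncomputable def w : R := X 0 ^ 2 + X 0 * X 2
noncomputable def n₁ : R := X 0 * (X 0 + X 1) * (X 0 + X 2) * (X 0 + X 1 + X 2)
noncomputable def n₂ : R := X 1 ^ 2 + X 1 * X 2
noncomputable def u : R := X 0 ^ 2 * X 2 + X 0 * X 2 ^ 2 + X 1 ^ 3 + X 1 ^ 2 * X 2

lemma u_eq : (u : R) = X 2 * w + X 1 * n₂ := by rw [u, w, n₂]; ring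

lemma X_one_mul_sigmaC4_X_one : X 1 * sigmaC4 K (X 1) = n₂ := by simp [n₂]; ring

noncomputable def A : Subalgebra K R := Algebra.adjoin K {n₁, n₂, X 2}
noncomputable def B : Subalgebra K R := Algebra.adjoin K {n₁, X 1, X 2}
noncomputable def Bw : Subalgebra K R := Algebra.adjoin K {w, X 1, X 2}

lemma n₂_mem_B : (n₂ : R) ∈ B := by
  rw [n₂]
  exact add_mem (pow_mem (Algebra.subset_adjoin (by simp)) 2)
    (mul_mem (Algebra.subset_adjoin (by simp)) (Algebra.subset_adjoin (by simp)))

lemma A_le_B : (A : Subalgebra K R) ≤ B := by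
  refine Algebra.adjoin_le ?_
  rintro _ (rfl | rfl | rfl)
  exacts [Algebra.subset_adjoin (by simp), n₂_mem_B, Algebra.subset_adjoin (by simp)]

lemma exists_eq_add_mul_X_one {f : R} (hf : f ∈ B) : ∃ p ∈ A, ∃ q ∈ A, f = p + q * X 1 :=
  Algebra.exists_eq_add_mul_of_mem_adjoin (A := A) (t := X 1) (a₀ := n₂) (a₁ := -X 2)
    (Algebra.subset_adjoin (by simp)) (neg_mem (Algebra.subset_adjoin (by simp)))
    (by rw [n₂]; ring)
    (by rintro _ (rfl | rfl | rfl) <;>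
      first | exact Or.inl rfl | exact Or.inr (Algebra.subset_adjoin (by simp))) hf

lemma exists_eq_add_mul_X_zero (f : R) : ∃ p ∈ Bw, ∃ q ∈ Bw, f = p + q * X 0 := by
  refine Algebra.exists_eq_add_mul_of_mem_adjoin (A := Bw) (t := X 0) (a₀ := w) (a₁ := -X 2)
    (Algebra.subset_adjoin (by simp)) (neg_mem (Algebra.subset_adjoin (by simp)))
    (by rw [w]; ring) ?_ (by rw [adjoin_range_X]; exact Algebra.mem_top)
  rintro _ ⟨i, rfl⟩
  fin_cases i <;>
    first | exact Or.inl rfl | exact Or.inr (Algebra.subset_adjoin (by simp))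

local notation "S" => MvPolynomial (Fin 2) K

lemma finSuccEquiv_X_one : finSuccEquiv K 2 (X 1) = Polynomial.C (X 0) :=
  finSuccEquiv_X_succ (j := 0)

lemma finSuccEquiv_X_two : finSuccEquiv K 2 (X 2) = Polynomial.C (X 1) :=
  finSuccEquiv_X_succ (j := 1)

lemma natDegree_finSuccEquiv_n₁ : (finSuccEquiv K 2 n₁).natDegree = 4 := by
  simp only [n₁, map_mul, map_add, finSuccEquiv_X_zero, finSuccEquiv_X_one, finSuccEquiv_X_two]
  compute_degree!

lemma natDegree_finSuccEquiv_w : (finSuccEquiv K 2 w).natDegree = 2 := by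
  simp only [w, map_mul, map_add, map_pow, finSuccEquiv_X_zero, finSuccEquiv_X_two]
  compute_degree!

lemma finSuccEquiv_n₂ :
    finSuccEquiv K 2 n₂ = Polynomial.C (X 0 ^ 2 + X 0 * X 1) := by
  simp [n₂, finSuccEquiv_X_one, finSuccEquiv_X_two]

lemma finSuccEquiv_symm_C_mem_B (s : S) : (finSuccEquiv K 2).symm (Polynomial.C s) ∈ B := by
  induction s using MvPolynomial.induction_on with
  | C r =>
    rw [← algebraMap_eq, ← Polynomial.algebraMap_apply, AlgEquiv.commutes]
    exact Subalgebra.algebraMap_mem _ r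
  | add s t hs ht => rw [Polynomial.C_add, map_add]; exact add_mem hs ht
  | mul_X s i hs =>
    rw [Polynomial.C_mul, map_mul, (finSuccEquiv K 2).symm_apply_eq.mpr finSuccEquiv_X_succ.symm]
    refine mul_mem hs (Algebra.subset_adjoin ?_)
    fin_cases i <;> simp

lemma mem_B_iff {f : R} :
    f ∈ B ↔ ∃ P : Polynomial S, finSuccEquiv K 2 f = P.comp (finSuccEquiv K 2 n₁) := by
  constructor
  · intro hf
    induction hf using Algebra.adjoin_induction with
    | mem x hx =>
      rcases hx with rfl | rfl | rfl
      · exact ⟨Polynomial.X, (Polynomial.X_comp).symm⟩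
      · exact ⟨Polynomial.C (X 0), by rw [Polynomial.C_comp, finSuccEquiv_X_one]⟩
      · exact ⟨Polynomial.C (X 1), by rw [Polynomial.C_comp, finSuccEquiv_X_two]⟩
    | algebraMap r =>
      exact ⟨Polynomial.C (algebraMap K S r), by
        rw [AlgEquiv.commutes, Polynomial.C_comp, Polynomial.algebraMap_apply]⟩
    | add x y _ _ hx hy =>
      obtain ⟨P, hP⟩ := hx
      obtain ⟨Q, hQ⟩ := hy
      exact ⟨P + Q, by rw [map_add, hP, hQ, Polynomial.add_comp]⟩
    | mul x y _ _ hx hy =>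
      obtain ⟨P, hP⟩ := hx
      obtain ⟨Q, hQ⟩ := hy
      exact ⟨P * Q, by rw [map_mul, hP, hQ, Polynomial.mul_comp]⟩
  · rintro ⟨P, hP⟩
    rw [← (finSuccEquiv K 2).symm_apply_apply f, hP]
    clear hP
    induction P using Polynomial.induction_on with
    | C s => rw [Polynomial.C_comp]; exact finSuccEquiv_symm_C_mem_B s
    | add P Q hP hQ => rw [Polynomial.add_comp, map_add]; exact add_mem hP hQ
    | monomial n s ih =>
      rw [pow_succ, ← mul_assoc, Polynomial.mul_comp, Polynomial.X_comp, map_mul,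
        AlgEquiv.symm_apply_apply]
      exact mul_mem ih (Algebra.subset_adjoin (by simp))

lemma eq_zero_of_add_mul_w_eq_zero {p q : R} (hp : p ∈ B) (hq : q ∈ B) (h : p + q * w = 0) :
    p = 0 ∧ q = 0 := by
  obtain ⟨P, hP⟩ := mem_B_iff.mp hp
  obtain ⟨Q, hQ⟩ := mem_B_iff.mp hq
  obtain ⟨hP₀, hQ₀⟩ := Polynomial.eq_zero_of_comp_add_comp_mul_eq_zero
    (P := P) (Q := Q) (W := finSuccEquiv K 2 w) (by rw [natDegree_finSuccEquiv_n₁]; norm_num)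
    (by rw [natDegree_finSuccEquiv_n₁, natDegree_finSuccEquiv_w]; norm_num)
    (by rw [← hP, ← hQ, ← map_mul, ← map_add, h, map_zero])
  rw [hP₀, Polynomial.zero_comp, map_eq_zero_iff _ (AlgEquiv.injective _)] at hP
  rw [hQ₀, Polynomial.zero_comp, map_eq_zero_iff _ (AlgEquiv.injective _)] at hQ
  exact ⟨hP, hQ⟩

lemma X_one_not_dvd : ¬ (X 1 : S) ∣ X 0 ^ 2 + X 0 * X 1 := fun h => by
  simpa using map_dvd (aeval ![1, 0] : S →ₐ[K] K) h

lemma exists_eq_X_two_mul_of_mul_n₂_eq {q b : R} (hq : q ∈ B) (hb : b ∈ B)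
    (h : q * n₂ = X 2 * b) : ∃ c ∈ B, q = X 2 * c := by
  obtain ⟨Q, hQ⟩ := mem_B_iff.mp hq
  obtain ⟨P, hP⟩ := mem_B_iff.mp hb
  have hcomp : (Q * Polynomial.C (X 0 ^ 2 + X 0 * X 1) - Polynomial.C (X 1) * P).comp
      (finSuccEquiv K 2 n₁) = 0 := by
    rw [Polynomial.sub_comp, Polynomial.mul_comp, Polynomial.mul_comp, Polynomial.C_comp,
      Polynomial.C_comp, ← hQ, ← hP, ← finSuccEquiv_n₂, ← finSuccEquiv_X_two, ← map_mul,
      ← map_mul, h, sub_self]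
  have hQP := sub_eq_zero.mp (Polynomial.eq_zero_of_comp_eq_zero
    (by rw [natDegree_finSuccEquiv_n₁]; norm_num) hcomp)
  obtain ⟨Q', rfl⟩ : Polynomial.C (X 1) ∣ Q := (Polynomial.C_dvd_iff_dvd_coeff _ _).mpr fun i =>
    (X_prime.dvd_or_dvd ⟨P.coeff i, by
      rw [← Polynomial.coeff_mul_C, hQP, Polynomial.coeff_C_mul]⟩).resolve_right X_one_not_dvd
  refine ⟨(finSuccEquiv K 2).symm (Q'.comp (finSuccEquiv K 2 n₁)),
    mem_B_iff.mpr ⟨Q', by simp⟩, ?_⟩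
  apply (finSuccEquiv K 2).injective
  rw [hQ, map_mul, AlgEquiv.apply_symm_apply, finSuccEquiv_X_two, Polynomial.mul_comp,
    Polynomial.C_comp]

lemma eq_zero_of_add_mul_u_eq_zero {c₁ c₂ : R} (hc₁ : c₁ ∈ A) (hc₂ : c₂ ∈ A)
    (h : c₁ + c₂ * u = 0) : c₁ = 0 ∧ c₂ = 0 := by
  have hX₁ : (X 1 : R) ∈ B := Algebra.subset_adjoin (by simp)
  have hX₂ : (X 2 : R) ∈ B := Algebra.subset_adjoin (by simp)
  obtain ⟨h₁, h₂⟩ := eq_zero_of_add_mul_w_eq_zero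
    (add_mem (A_le_B hc₁) (mul_mem (A_le_B hc₂) (mul_mem hX₁ n₂_mem_B)))
    (mul_mem (A_le_B hc₂) hX₂) (by rw [u_eq] at h; linear_combination h)
  obtain rfl : c₂ = 0 := by simpa [X_ne_zero] using h₂
  simpa using h₁

variable [CharP K 2]

lemma sigmaC4_w : sigmaC4 K w = w + n₂ := by simp [w, n₂]; grind

lemma sigmaC4_n₁ : sigmaC4 K n₁ = n₁ := by simp [n₁]; grind

lemma sigmaC4_n₂ : sigmaC4 K n₂ = n₂ := by simp [n₂]; grind

lemma sigmaC4_u : sigmaC4 K u = u := by simp [u]; grind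

lemma sigmaC4_sigmaC4_X_zero : sigmaC4 K (sigmaC4 K (X 0)) = X 0 + X 2 := by simp; grind

lemma sigmaC4_sigmaC4_w : sigmaC4 K (sigmaC4 K w) = w := by
  rw [sigmaC4_w, map_add, sigmaC4_w, sigmaC4_n₂, add_assoc, CharTwo.add_self_eq_zero, add_zero]

lemma w_sq : (w : R) ^ 2 = n₁ + n₂ * w := by rw [w, n₁, n₂]; grind

lemma exists_eq_add_mul_w {f : R} (hf : f ∈ Bw) : ∃ p ∈ B, ∃ q ∈ B, f = p + q * w :=
  Algebra.exists_eq_add_mul_of_mem_adjoin (A := B) (t := w) (a₀ := n₁) (a₁ := n₂)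
    (Algebra.subset_adjoin (by simp)) n₂_mem_B w_sq (by rintro _ (rfl | rfl | rfl) <;>
      first | exact Or.inl rfl | exact Or.inr (Algebra.subset_adjoin (by simp))) hf

lemma prod_range_four_iterate_sigmaC4_X_zero :
    ∏ i ∈ Finset.range 4, (⇑(sigmaC4 K))^[i] (X 0) = n₁ := by
  simp [Finset.prod_range_succ, n₁]; grind

lemma sigmaC4_eq_self_of_mem_A {x : R} (hx : x ∈ A) : sigmaC4 K x = x :=
  AlgHom.adjoin_le_equalizer (sigmaC4 K) (AlgHom.id K R)
    (by rintro _ (rfl | rfl | rfl) <;> simp [sigmaC4_n₁, sigmaC4_n₂]) hx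

lemma sigmaC4_sigmaC4_eq_self_of_mem_Bw {x : R} (hx : x ∈ Bw) : sigmaC4 K (sigmaC4 K x) = x :=
  AlgHom.adjoin_le_equalizer ((sigmaC4 K).comp (sigmaC4 K)) (AlgHom.id K R)
    (by rintro _ (rfl | rfl | rfl) <;> simp [sigmaC4_sigmaC4_w]; grind) hx

lemma sigmaC4_mem_B {x : R} (hx : x ∈ B) : sigmaC4 K x ∈ B := by
  refine (Algebra.adjoin_le (?_ : _ ⊆ (B.comap (sigmaC4 K) : Set R))) hx
  rintro _ (rfl | rfl | rfl) <;>
    simp only [Subalgebra.coe_comap, Set.mem_preimage, SetLike.mem_coe]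
  · rw [sigmaC4_n₁]; exact Algebra.subset_adjoin (by simp)
  · rw [sigmaC4_X_one]
    exact add_mem (Algebra.subset_adjoin (by simp)) (Algebra.subset_adjoin (by simp))
  · rw [sigmaC4_X_two]; exact Algebra.subset_adjoin (by simp)

lemma mem_A_of_mem_B_of_sigmaC4_eq {x : R} (hx : x ∈ B) (hσ : sigmaC4 K x = x) : x ∈ A := by
  obtain ⟨a, ha, b, hb, rfl⟩ := exists_eq_add_mul_X_one hx
  rw [map_add, map_mul, sigmaC4_eq_self_of_mem_A ha, sigmaC4_eq_self_of_mem_A hb,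
    sigmaC4_X_one] at hσ
  obtain rfl : b = 0 := by
    simpa [X_ne_zero] using (show b * X 2 = 0 by linear_combination hσ)
  simpa using ha

lemma mem_Bw_of_sigmaC4_eq {g : R} (hg : sigmaC4 K g = g) : g ∈ Bw := by
  obtain ⟨p, hp, q, hq, rfl⟩ := exists_eq_add_mul_X_zero g
  have hσσ : sigmaC4 K (sigmaC4 K (p + q * X 0)) = p + q * X 0 := by rw [hg, hg]
  rw [map_add, map_mul, map_add, map_mul, sigmaC4_sigmaC4_eq_self_of_mem_Bw hp,
    sigmaC4_sigmaC4_eq_self_of_mem_Bw hq, sigmaC4_sigmaC4_X_zero] at hσσ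
  obtain rfl : q = 0 := by
    simpa [X_ne_zero] using (show q * X 2 = 0 by linear_combination hσσ)
  simpa using hp

lemma sigmaC4_eq_of_sigmaC4_add_mul_w_eq {p q : R} (hp : p ∈ B) (hq : q ∈ B)
    (h : sigmaC4 K (p + q * w) = p + q * w) : sigmaC4 K q = q ∧ sigmaC4 K p + q * n₂ = p := by
  rw [map_add, map_mul, sigmaC4_w] at h
  obtain ⟨h₀, h₁⟩ := eq_zero_of_add_mul_w_eq_zero
    (add_mem (sub_mem (sigmaC4_mem_B hp) hp) (mul_mem (sigmaC4_mem_B hq) n₂_mem_B))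
    (sub_mem (sigmaC4_mem_B hq) hq) (by linear_combination h)
  have hσq := sub_eq_zero.mp h₁
  exact ⟨hσq, by rw [← hσq]; linear_combination h₀⟩

lemma exists_eq_add_mul_u_of_sigmaC4_eq {g : R} (hg : sigmaC4 K g = g) :
    ∃ c₁ ∈ A, ∃ c₂ ∈ A, g = c₁ + c₂ * u := by
  obtain ⟨p, hp, q, hq, rfl⟩ := exists_eq_add_mul_w (mem_Bw_of_sigmaC4_eq hg)
  obtain ⟨hσq, hσp⟩ := sigmaC4_eq_of_sigmaC4_add_mul_w_eq hp hq hg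
  obtain ⟨a, ha, b, hb, rfl⟩ := exists_eq_add_mul_X_one hp
  rw [map_add, map_mul, sigmaC4_eq_self_of_mem_A ha, sigmaC4_eq_self_of_mem_A hb,
    sigmaC4_X_one] at hσp
  obtain ⟨c, hc, rfl⟩ := exists_eq_X_two_mul_of_mul_n₂_eq hq (neg_mem (A_le_B hb))
    (by linear_combination hσp)
  rw [map_mul, sigmaC4_X_two] at hσq
  have hcA := mem_A_of_mem_B_of_sigmaC4_eq hc (mul_left_cancel₀ (X_ne_zero 2) hσq)
  have hbc : b = c * n₂ := by
    refine mul_left_cancel₀ (X_ne_zero (2 : Fin 3)) ?_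
    linear_combination hσp - X 2 * c * n₂ * (CharTwo.two_eq_zero : (2 : R) = 0)
  refine ⟨a, ha, c, hcA, ?_⟩
  rw [u_eq, hbc]
  ring

end C4Invariants

open C4Invariants in
/-- For `char k = 2` and `G = C₄` acting on `V = V₃`,
`u = x₁²x₃ + x₁x₃² + x₂³ + x₂²x₃` is `G`-invariant and `k[V]^G` is a free module
over `A = k[N^G(x₁), N^G_H(x₂), x₃]` with basis `{1, u}`, where `H = ⟨σ²⟩`,
`N^G(x₁) = ∏_{i<4} σ^i(x₁)` and `N^G_H(x₂) = x₂·σ(x₂)`. -/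
theorem invariants_C4_free_basis_one_u
    {K : Type*} [Field K] [CharP K 2]
    (u N₁ N₂ : MvPolynomial (Fin 3) K)
    (hu : u = X 0 ^ 2 * X 2 + X 0 * X 2 ^ 2 + X 1 ^ 3 + X 1 ^ 2 * X 2)
    (hN₁ : N₁ = ∏ i ∈ Finset.range 4, (⇑(sigmaC4 K))^[i] (X 0))
    (hN₂ : N₂ = X 1 * sigmaC4 K (X 1)) :
    sigmaC4 K u = u ∧
    (∀ g : MvPolynomial (Fin 3) K, sigmaC4 K g = g →
        ∃ c₁ ∈ Algebra.adjoin K {N₁, N₂, X 2}, ∃ c₂ ∈ Algebra.adjoin K {N₁, N₂, X 2},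
          g = c₁ + c₂ * u) ∧
    (∀ c₁ ∈ Algebra.adjoin K {N₁, N₂, X 2}, ∀ c₂ ∈ Algebra.adjoin K {N₁, N₂, X 2},
        c₁ + c₂ * u = 0 → c₁ = 0 ∧ c₂ = 0) := by
  obtain rfl : u = C4Invariants.u := hu
  have hA : Algebra.adjoin K {N₁, N₂, X 2} = A := by
    rw [hN₁, hN₂, prod_range_four_iterate_sigmaC4_X_zero, X_one_mul_sigmaC4_X_one, A]
  rw [hA]
  exact ⟨sigmaC4_u, fun g hg => exists_eq_add_mul_u_of_sigmaC4_eq hg,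
    fun c₁ hc₁ c₂ hc₂ h => eq_zero_of_add_mul_u_eq_zero hc₁ hc₂ h⟩
end

section
/- Let k have characteristic 2, G = ⟨σ⟩ cyclic of order 4 acting on V = V_3 as above, Δ = σ−1, H = ⟨σ^2⟩, and A = k[N^G(x_1), N^G_H(x_2), x_3]. Then ker(Δ^2) = k[V]^H is generated as an A-module by {1, x_2, N^H(x_1), x_2·N^H(x_1)}, where N^H(x_1) = x_1·σ^2(x_1) = x_1^2 + x_1x_3, and this generating set is free. -/
open MvPolynomial

/-- `Δ = σ − 1` on `k[V₃]`. -/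
noncomputable def deltaC4 (K : Type*) [CommRing K] (f : MvPolynomial (Fin 3) K) :
    MvPolynomial (Fin 3) K :=
  sigmaC4 K f - f

/-!
In characteristic `2`, `Δ² = σ² - 2σ + 1 = σ² + 1`, and `σ²` is the transvection
`x₁ ↦ x₁ + x₃`. Since `x₁² = N^H(x₁) - x₃x₁`, `k[V]` is spanned by `1, x₁` over
`S = k[x₂, x₃, N^H(x₁)]`; for `p, q ∈ S`, `σ²(p + q x₁) - (p + q x₁) = q x₃`, so `k[V]^H = S`.
Likewise `x₂² = N^G_H(x₂) - x₃x₂` and `N^H(x₁)² = N^G(x₁) - N^G_H(x₂) N^H(x₁)`, so `S` is spanned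
over `A` by the products of `{1, x₂}` and `{1, N^H(x₁)}`. Freeness uses the same trick twice:
`x₂ ↦ x₂ + x₃` fixes `A` and `N^H(x₁)` and separates the coefficient of `x₂`, and then
`x₁ ↦ x₁ + x₂` fixes `A` and moves `N^H(x₁)` by `N^G_H(x₂) ≠ 0`.
-/

theorem Algebra.adjoin_singleton_le_span_pair {S R : Type*} [CommRing S] [CommRing R]
    [Algebra S R] {x : R} (hx : x * x ∈ Submodule.span S {1, x}) :
    Subalgebra.toSubmodule (Algebra.adjoin S {x}) ≤ Submodule.span S {1, x} := by
  have hmul : Submodule.span S {1, x} * Submodule.span S {1, x} ≤ Submodule.span S {1, x} := by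
    rw [Submodule.span_mul_span, Submodule.span_le]
    rintro _ ⟨a, ha, b, hb, rfl⟩
    rcases ha with rfl | rfl <;> rcases hb with rfl | rfl <;> simp only [mul_one, one_mul] <;>
      first | exact hx | exact Submodule.subset_span (by simp)
  let T := (Submodule.span S {1, x}).toSubalgebra (Submodule.subset_span (by simp))
    fun a b ha hb => hmul (Submodule.mul_mem_mul ha hb)
  exact Algebra.adjoin_le (S := T) (by simpa [T] using Submodule.subset_span (by simp))

theorem Subalgebra.mul_add_mul_mem_span_pair {K R : Type*} [CommRing K] [CommRing R]
    [Algebra K R] (S : Subalgebra K R) {a b : R} (ha : a ∈ S) (hb : b ∈ S) (x y : R) :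
    a * x + b * y ∈ Submodule.span S {x, y} := by
  refine Submodule.mem_span_pair.2 ⟨⟨a, ha⟩, ⟨b, hb⟩, ?_⟩
  rw [Subalgebra.smul_def, Subalgebra.smul_def, smul_eq_mul, smul_eq_mul]

section Translation

variable {R F : Type*} [CommRing R] [NoZeroDivisors R] [FunLike F R R] [RingHomClass F R R]
  (φ : F) {u v x d : R}

theorem eq_zero_of_map_add_mul_eq_self (hu : φ u = u) (hv : φ v = v) (hx : φ x = x + d)
    (hd : d ≠ 0) (h : φ (u + v * x) = u + v * x) : v = 0 := by
  rw [map_add, map_mul, hu, hv, hx] at h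
  exact (mul_eq_zero.1 (by linear_combination h)).resolve_right hd

theorem eq_zero_and_eq_zero_of_add_mul_eq_zero (hu : φ u = u) (hv : φ v = v)
    (hx : φ x = x + d) (hd : d ≠ 0) (h : u + v * x = 0) : u = 0 ∧ v = 0 := by
  have hv0 : v = 0 := eq_zero_of_map_add_mul_eq_self φ hu hv hx hd (by rw [h, map_zero])
  exact ⟨by simpa [hv0] using h, hv0⟩

end Translation

noncomputable def transvection (K : Type*) [CommSemiring K] {ι : Type*} [DecidableEq ι]
    (i j : ι) : MvPolynomial ι K →ₐ[K] MvPolynomial ι K :=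
  aeval (Function.update X i (X i + X j))

@[simp]
theorem transvection_X {K ι : Type*} [CommSemiring K] [DecidableEq ι] (i j k : ι) :
    transvection K i j (X k) = if k = i then X i + X j else X k := by
  simp [transvection, Function.update_apply]

section C4

variable (K : Type*) [CommRing K]

/-- `N^H(x₁)`, `N^G_H(x₂)` and `N^G(x₁)`, expanded in characteristic `2`. -/
noncomputable def normH : MvPolynomial (Fin 3) K := X 0 ^ 2 + X 0 * X 2

noncomputable def normGH : MvPolynomial (Fin 3) K := X 1 ^ 2 + X 1 * X 2

noncomputable def normG : MvPolynomial (Fin 3) K :=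
  normH K ^ 2 + normH K * normGH K

/-- `k[x₂, x₃, N^H(x₁)]`, which is `k[V]^H` by `mem_invariantsH_iff`. -/
noncomputable def invariantsH : Subalgebra K (MvPolynomial (Fin 3) K) :=
  Algebra.adjoin K {X 1, X 2, normH K}

noncomputable def baseA : Subalgebra K (MvPolynomial (Fin 3) K) :=
  Algebra.adjoin K {normG K, normGH K, X 2}

variable {K}

theorem X_one_mul_sigmaC4_X_one : X 1 * sigmaC4 K (X 1) = normGH K := by
  simp [sigmaC4, normGH]
  ring

theorem transvection_one_two_normH : transvection K 1 2 (normH K) = normH K := by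
  simp [normH]

theorem normGH_ne_zero [Nontrivial K] : normGH K ≠ 0 := fun h => by
  simpa [normGH] using congrArg (eval ![0, 1, 0]) h

theorem transvection_zero_one_normGH : transvection K 0 1 (normGH K) = normGH K := by
  simp [normGH]

theorem mem_span_one_X_zero (f : MvPolynomial (Fin 3) K) :
    f ∈ Submodule.span (invariantsH K) {1, X 0} := by
  have hX : (X 0 * X 0 : MvPolynomial (Fin 3) K) ∈ Submodule.span (invariantsH K) {1, X 0} := by
    convert (invariantsH K).mul_add_mul_mem_span_pair (a := normH K) (b := -X 2)
      (Algebra.subset_adjoin (by simp)) (neg_mem (Algebra.subset_adjoin (by simp))) 1 (X 0) using 1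
    simp only [normH]
    ring
  have hf : f ∈ Algebra.adjoin K (Set.range X) := by
    rw [adjoin_range_X]
    trivial
  refine Algebra.adjoin_singleton_le_span_pair hX <|
    (Algebra.adjoin_union_eq_adjoin_adjoin K {X 1, X 2, normH K} {X 0}).le
      (Algebra.adjoin_mono ?_ hf)
  rintro _ ⟨i, rfl⟩
  fin_cases i <;> simp

theorem mem_span_of_mem_invariantsH {f : MvPolynomial (Fin 3) K} (hf : f ∈ invariantsH K) :
    f ∈ Submodule.span (baseA K) (Set.range ![1, X 1, normH K, X 1 * normH K]) := by
  have hX1 : (X 1 * X 1 : MvPolynomial (Fin 3) K) ∈ Submodule.span (baseA K) {1, X 1} := by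
    convert (baseA K).mul_add_mul_mem_span_pair (a := normGH K) (b := -X 2)
      (Algebra.subset_adjoin (by simp)) (neg_mem (Algebra.subset_adjoin (by simp))) 1 (X 1) using 1
    simp only [normGH]
    ring
  have hH : normH K * normH K ∈ Submodule.span (baseA K) {1, normH K} := by
    convert (baseA K).mul_add_mul_mem_span_pair (a := normG K) (b := -normGH K)
      (Algebra.subset_adjoin (by simp)) (neg_mem (Algebra.subset_adjoin (by simp))) 1 (normH K)
      using 1
    simp only [normG]
    ring
  have hle : invariantsH K ≤
      (Algebra.adjoin (baseA K) ({X 1} ∪ {normH K})).restrictScalars K := by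
    rw [baseA, ← Algebra.adjoin_union_eq_adjoin_adjoin]
    exact Algebra.adjoin_mono (by grind)
  have hprod := (Algebra.adjoin_union_coe_submodule (baseA K) {X 1} {normH K}).le.trans
    (mul_le_mul' (Algebra.adjoin_singleton_le_span_pair hX1)
      (Algebra.adjoin_singleton_le_span_pair hH))
  rw [Submodule.span_mul_span] at hprod
  refine Submodule.span_mono ?_ (hprod (hle hf))
  rintro _ ⟨a, ha, b, hb, rfl⟩
  rcases ha with rfl | rfl <;> rcases hb with rfl | rfl
  exacts [⟨0, by simp⟩, ⟨2, by simp⟩, ⟨1, by simp⟩, ⟨3, by simp⟩]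

variable [CharP K 2]

theorem sigmaC4_iterate_two : (⇑(sigmaC4 K))^[2] = transvection K 0 2 := by
  suffices (sigmaC4 K).comp (sigmaC4 K) = transvection K 0 2 from congrArg DFunLike.coe this
  refine MvPolynomial.algHom_ext fun i => ?_
  fin_cases i <;> simp [sigmaC4] <;> grind

theorem deltaC4_iterate_two (f : MvPolynomial (Fin 3) K) :
    (deltaC4 K)^[2] f = (⇑(sigmaC4 K))^[2] f + f := by
  simp only [Function.iterate_succ, Function.iterate_zero,
    Function.comp_apply, deltaC4, map_sub]
  grind

theorem deltaC4_iterate_two_eq_zero_iff (f : MvPolynomial (Fin 3) K) :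
    (deltaC4 K)^[2] f = 0 ↔ (⇑(sigmaC4 K))^[2] f = f := by
  rw [deltaC4_iterate_two]
  grind

theorem X_zero_mul_sigmaC4_iterate_two_X_zero : X 0 * (⇑(sigmaC4 K))^[2] (X 0) = normH K := by
  rw [sigmaC4_iterate_two]
  simp [normH]
  ring

theorem prod_sigmaC4_iterate_X_zero :
    ∏ i ∈ Finset.range 4, (⇑(sigmaC4 K))^[i] (X 0) = normG K := by
  simp [Finset.prod_range_succ, sigmaC4, normG, normH, normGH]
  grind

theorem transvection_zero_two_normH : transvection K 0 2 (normH K) = normH K := by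
  simp [normH]
  grind

theorem transvection_zero_one_normH :
    transvection K 0 1 (normH K) = normH K + normGH K := by
  simp [normH, normGH]
  grind

theorem transvection_one_two_normGH : transvection K 1 2 (normGH K) = normGH K := by
  simp [normGH]
  grind

theorem transvection_one_two_eq_self_of_mem_baseA {a : MvPolynomial (Fin 3) K}
    (ha : a ∈ baseA K) : transvection K 1 2 a = a := by
  refine AlgHom.adjoin_le_equalizer (transvection K 1 2) (AlgHom.id K _) ?_ ha
  rintro _ (rfl | rfl | rfl) <;>
    simp [normG, transvection_one_two_normH, transvection_one_two_normGH]

theorem transvection_zero_one_eq_self_of_mem_baseA {a : MvPolynomial (Fin 3) K}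
    (ha : a ∈ baseA K) : transvection K 0 1 a = a := by
  refine AlgHom.adjoin_le_equalizer (transvection K 0 1) (AlgHom.id K _) ?_ ha
  rintro _ (rfl | rfl | rfl)
  · simp only [normG, map_add, map_mul, map_pow, transvection_zero_one_normH,
      transvection_zero_one_normGH, AlgHom.id_apply]
    grind
  · exact transvection_zero_one_normGH
  · simp

theorem transvection_zero_two_eq_self_of_mem_invariantsH {f : MvPolynomial (Fin 3) K}
    (hf : f ∈ invariantsH K) : transvection K 0 2 f = f := by
  refine AlgHom.adjoin_le_equalizer (transvection K 0 2) (AlgHom.id K _) ?_ hf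
  rintro _ (rfl | rfl | rfl) <;> simp [transvection_zero_two_normH]

theorem mem_invariantsH_iff [IsDomain K] (f : MvPolynomial (Fin 3) K) :
    f ∈ invariantsH K ↔ transvection K 0 2 f = f := by
  refine ⟨transvection_zero_two_eq_self_of_mem_invariantsH, fun hf => ?_⟩
  obtain ⟨p, q, hpq⟩ := Submodule.mem_span_pair.1 (mem_span_one_X_zero f)
  rw [Subalgebra.smul_def, Subalgebra.smul_def, smul_eq_mul, smul_eq_mul, mul_one] at hpq
  have hq : (q : MvPolynomial (Fin 3) K) = 0 :=
    eq_zero_of_map_add_mul_eq_self (transvection K 0 2)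
      (transvection_zero_two_eq_self_of_mem_invariantsH p.2)
      (transvection_zero_two_eq_self_of_mem_invariantsH q.2) (x := X 0) (d := X 2) (by simp)
      (X_ne_zero 2) (by rw [hpq, hf])
  rw [← hpq, hq, zero_mul, add_zero]
  exact p.2

theorem eq_zero_and_eq_zero_of_add_mul_normH_eq_zero [IsDomain K]
    {a b : MvPolynomial (Fin 3) K} (ha : a ∈ baseA K) (hb : b ∈ baseA K)
    (h : a + b * normH K = 0) : a = 0 ∧ b = 0 :=
  eq_zero_and_eq_zero_of_add_mul_eq_zero (transvection K 0 1)
    (transvection_zero_one_eq_self_of_mem_baseA ha) (transvection_zero_one_eq_self_of_mem_baseA hb)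
    transvection_zero_one_normH normGH_ne_zero h

theorem linearIndependent_baseA [IsDomain K] :
    LinearIndependent (baseA K) ![1, X 1, normH K, X 1 * normH K] := by
  rw [Fintype.linearIndependent_iff]
  intro g hg
  simp only [Fin.sum_univ_four, Matrix.cons_val, Subalgebra.smul_def, smul_eq_mul] at hg
  have hfix (i : Fin 4) : transvection K (1 : Fin 3) 2 (g i) = g i :=
    transvection_one_two_eq_self_of_mem_baseA (g i).2
  obtain ⟨h02, h13⟩ := eq_zero_and_eq_zero_of_add_mul_eq_zero (transvection K (1 : Fin 3) 2)
    (u := g 0 + g 2 * normH K) (v := g 1 + g 3 * normH K) (x := X 1) (d := X 2)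
    (by simp [hfix, transvection_one_two_normH]) (by simp [hfix, transvection_one_two_normH])
    (by simp) (X_ne_zero 2) (by linear_combination hg)
  obtain ⟨h0, h2⟩ := eq_zero_and_eq_zero_of_add_mul_normH_eq_zero (g 0).2 (g 2).2 h02
  obtain ⟨h1, h3⟩ := eq_zero_and_eq_zero_of_add_mul_normH_eq_zero (g 1).2 (g 3).2 h13
  intro i
  fin_cases i <;> exact Subtype.ext ‹_›

end C4

/-- For `char k = 2`, `G = C₄` acting on `V₃`, `H = ⟨σ²⟩` and
`A = k[N^G(x₁), N^G_H(x₂), x₃]`: `ker(Δ²) = k[V]^H` and it is freely generated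
as an `A`-module by `{1, x₂, N^H(x₁), x₂·N^H(x₁)}`, where `N^H(x₁) = x₁·σ²(x₁)`. -/
theorem K2_free_over_A_C4
    {K : Type*} [Field K] [CharP K 2]
    (N₁ N₂ NH : MvPolynomial (Fin 3) K)
    (hN₁ : N₁ = ∏ i ∈ Finset.range 4, (⇑(sigmaC4 K))^[i] (X 0))
    (hN₂ : N₂ = X 1 * sigmaC4 K (X 1))
    (hNH : NH = X 0 * (⇑(sigmaC4 K))^[2] (X 0))
    (F : Fin 4 → MvPolynomial (Fin 3) K)
    (hF : F = ![1, X 1, NH, X 1 * NH]) :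
    -- `ker(Δ²) = k[V]^H`
    (∀ f : MvPolynomial (Fin 3) K,
        (deltaC4 K)^[2] f = 0 ↔ (⇑(sigmaC4 K))^[2] f = f) ∧
    -- the proposed generators lie in `ker(Δ²)`
    (∀ i : Fin 4, (deltaC4 K)^[2] (F i) = 0) ∧
    -- they generate `ker(Δ²)` over `A`
    (∀ f : MvPolynomial (Fin 3) K, (deltaC4 K)^[2] f = 0 →
        f ∈ Submodule.span (Algebra.adjoin K {N₁, N₂, X 2}) (Set.range F)) ∧
    -- and they are `A`-linearly independent
    LinearIndependent (Algebra.adjoin K {N₁, N₂, X 2}) F := by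
  obtain rfl : N₁ = normG K := hN₁.trans prod_sigmaC4_iterate_X_zero
  obtain rfl : N₂ = normGH K := hN₂.trans X_one_mul_sigmaC4_X_one
  obtain rfl : NH = normH K := hNH.trans X_zero_mul_sigmaC4_iterate_two_X_zero
  subst hF
  have hker (f : MvPolynomial (Fin 3) K) : (deltaC4 K)^[2] f = 0 ↔ f ∈ invariantsH K := by
    rw [deltaC4_iterate_two_eq_zero_iff, sigmaC4_iterate_two, mem_invariantsH_iff]
  have hX1 : X 1 ∈ invariantsH K := Algebra.subset_adjoin (by simp)
  have hH : normH K ∈ invariantsH K := Algebra.subset_adjoin (by simp)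
  refine ⟨deltaC4_iterate_two_eq_zero_iff, fun i => (hker _).2 ?_,
    fun f hf => mem_span_of_mem_invariantsH ((hker f).1 hf), linearIndependent_baseA⟩
  fin_cases i
  exacts [one_mem _, hX1, hH, mul_mem hX1 hH]
end
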